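/- Let σ be a finite sequence of signs in {+, −} with k minus signs and k+s plus signs, where k ≥ 0 and k+s ≥ 0 and σ is nonempty. Then the minimum n for which there exists a binary sequence x of length n with x_n = 1 and signature σ(x) = σ equals 3k + s + 1, and this minimum does not depend on the order of the signs in σ. -/

import Mathlib

/-!
Every sign of the signature comes from a pair `(1, _)` whose `1` is not the last letter, and every
minus sign also uses up a `0`, the second letter of its pair, which is never the first letter of
a word. So a word ending in `1` with signature `σ` has at least `|σ| + 1` ones and at least as many
zeros as `σ` has minus signs: its length is at least `|σ| + #(−) + 1 = 3k + s + 1`, a number that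
only depends on the sign counts. Writing `1` for each `+`, `10` for each `−` and a final `1`
attains the bound.
-/

/-- The signature of a binary sequence `x` of length `n`: scan consecutive pairs in order,
recording `true` (a plus sign) for each pair `(1,1)` and `false` (a minus sign) for each pair
`(1,0)`, ignoring pairs whose first entry is `0`. -/
def signSeq (n : ℕ) (x : Fin n → Bool) : List Bool :=
  (List.ofFn fun i : Fin (n - 1) =>
    if x ⟨i.val, by have := i.isLt; omega⟩ = true then
      some (x ⟨i.val + 1, by have := i.isLt; omega⟩)
    else none).reduceOption

def signature : List Bool → List Bool
  | a :: b :: l => (if a then [b] else []) ++ signature (b :: l)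
  | _ => []

theorem signature_cons (a : Bool) (l : List Bool) :
    signature (a :: l) = (if a then l.head?.toList else []) ++ signature l := by
  cases l <;> cases a <;> rfl

theorem signSeq_eq_signature : ∀ (n : ℕ) (x : Fin n → Bool), signSeq n x = signature (List.ofFn x)
  | 0, _ | 1, _ => rfl
  | n + 2, x => by
    rw [List.ofFn_succ, ← Fin.tail_def, signature_cons, ← signSeq_eq_signature, signSeq, signSeq,
      List.ofFn_succ, ← List.singleton_append, List.reduceOption_append]
    congr 1
    by_cases hx : x 0 = true <;> simp [hx, Fin.tail]

theorem length_signature : ∀ L : List Bool, (signature L).length = L.dropLast.count true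
  | a :: b :: l => by
    rw [List.dropLast_cons_cons, List.count_cons, ← length_signature (b :: l)]
    cases a <;> simp [signature]
  | [] | [_] => rfl

theorem count_false_signature_le : ∀ L : List Bool, (signature L).count false ≤ L.tail.count false
  | a :: b :: l => by
    have := count_false_signature_le (b :: l)
    cases a <;> cases b <;> simp [signature_cons] at * <;> omega
  | [] | [_] => by simp [signature]

theorem length_add_count_false_signature_lt {L : List Bool} (h : L.getLast? = some true) :
    (signature L).length + (signature L).count false < L.length := by
  have hcount_true : L.count true = L.dropLast.count true + 1 := by
    conv_lhs => rw [← List.dropLast_append_getLast? _ h]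
    simp
  have hcount_false : L.tail.count false ≤ L.count false := L.tail_sublist.count_le false
  have := count_false_signature_le L
  rw [length_signature, ← List.count_true_add_count_false L]
  omega

def realizingLengths (σ : List Bool) : Set ℕ :=
  {n | ∃ x : Fin n → Bool, (∀ i : Fin n, (i : ℕ) = n - 1 → x i = true) ∧ signSeq n x = σ}

theorem length_mem_realizingLengths {L : List Bool} (h : L.getLast? = some true) :
    L.length ∈ realizingLengths (signature L) := by
  refine ⟨L.get, fun i hi => ?_, by rw [signSeq_eq_signature, List.ofFn_get]⟩
  rw [List.getLast?_eq_getElem?, ← hi] at h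
  simpa using h

theorem le_of_mem_realizingLengths {σ : List Bool} {n : ℕ} (hσ : σ ≠ [])
    (hn : n ∈ realizingLengths σ) : σ.length + σ.count false + 1 ≤ n := by
  obtain ⟨x, hlast, rfl⟩ := hn
  rw [signSeq_eq_signature] at hσ ⊢
  have hpos : 0 < n := Nat.pos_of_ne_zero (by rintro rfl; exact hσ rfl)
  have hx : (List.ofFn x).getLast? = some true := by
    rw [List.getLast?_eq_getElem?, List.length_ofFn, List.getElem?_ofFn]
    simp [hpos, hlast]
  simpa using length_add_count_false_signature_lt hx

def canonicalWord : List Bool → List Bool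
  | [] => [true]
  | true :: σ => true :: canonicalWord σ
  | false :: σ => true :: false :: canonicalWord σ

theorem head?_canonicalWord (σ : List Bool) : (canonicalWord σ).head? = some true := by
  rcases σ with _ | ⟨_ | _, _⟩ <;> rfl

theorem getLast?_canonicalWord : ∀ σ : List Bool, (canonicalWord σ).getLast? = some true
  | [] => rfl
  | b :: σ => by cases b <;> simp [canonicalWord, List.getLast?_cons, getLast?_canonicalWord σ]

theorem signature_canonicalWord : ∀ σ : List Bool, signature (canonicalWord σ) = σ
  | [] => rfl
  | b :: σ => by
    cases b <;> simp [canonicalWord, signature_cons, head?_canonicalWord, signature_canonicalWord σ]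

theorem length_canonicalWord : ∀ σ : List Bool,
    (canonicalWord σ).length = σ.length + σ.count false + 1
  | [] => rfl
  | b :: σ => by cases b <;> simp [canonicalWord, length_canonicalWord σ] <;> omega

theorem isLeast_realizingLengths {σ : List Bool} (hσ : σ ≠ []) :
    IsLeast (realizingLengths σ) (σ.length + σ.count false + 1) := by
  refine ⟨?_, fun n hn => le_of_mem_realizingLengths hσ hn⟩
  simpa [signature_canonicalWord, length_canonicalWord] using
    length_mem_realizingLengths (getLast?_canonicalWord σ)

theorem heady_min_length_general (σ : List Bool) (k : ℕ) (s : ℤ) (hne : σ ≠ [])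
    (hminus : σ.count false = k) (hplus : (σ.count true : ℤ) = (k : ℤ) + s) :
    ∃ m : ℕ, (m : ℤ) = 3 * (k : ℤ) + s + 1 ∧
      ∀ σ' : List Bool, σ'.Perm σ →
        IsLeast {n : ℕ | ∃ x : Fin n → Bool,
          (∀ i : Fin n, (i : ℕ) = n - 1 → x i = true) ∧ signSeq n x = σ'} m := by
  refine ⟨σ.length + σ.count false + 1, ?_, fun σ' hperm => ?_⟩
  · rw [← List.count_true_add_count_false σ]
    push_cast
    omega
  · rw [← hperm.length_eq, ← hperm.count_eq]
    exact isLeast_realizingLengths (by rintro rfl; exact hne (List.Perm.nil_eq hperm).symm)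

/-- Lemma 3 (heady case): if `σ` is a nonempty signature with `k` minus signs and `k + s`
plus signs (`k ≥ 0`, `k + s ≥ 0`), then the minimum length `n` of a binary sequence ending
in 1 with signature `σ` equals `3k + s + 1`; moreover this minimum is the same for every
rearrangement of the signs of `σ`. -/
theorem heady_min_length (σ : List Bool) (k : ℕ) (s : ℤ) (hne : σ ≠ [])
    (hminus : σ.count false = k) (hplus : (σ.count true : ℤ) = (k : ℤ) + s)
    (hks : 0 ≤ (k : ℤ) + s) :
    ∃ m : ℕ, (m : ℤ) = 3 * (k : ℤ) + s + 1 ∧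
      ∀ σ' : List Bool, σ'.Perm σ →
        IsLeast {n : ℕ | ∃ x : Fin n → Bool,
          (∀ i : Fin n, (i : ℕ) = n - 1 → x i = true) ∧ signSeq n x = σ'} m :=
  heady_min_length_general σ k s hne hminus hplus
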